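/- arXiv:2011.08524 — 2 statements merged into one kernel-verified Lean document; each statement's English description precedes it below -/
import Mathlib

section
/- Let r = (r_j)_{j≥1} be a sequence of positive real numbers. The set 𝔻_X(r) is an open subset of X if and only if inf_j r_j > 0. -/
open Filter Topology

noncomputable section

/-- A normalized Schauder basis of a complex Banach space `X`: vectors `e j` of norm one,
continuous linear coordinate functionals `coord j` biorthogonal to them, with uniformly
bounded norms, such that the partial sums of the basis expansion of every `x` converge to `x`. -/
structure NormalizedSchauderBasis (X : Type*) [NormedAddCommGroup X] [NormedSpace ℂ X] where
  e : ℕ → X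
  coord : ℕ → X →L[ℂ] ℂ
  norm_e : ∀ j, ‖e j‖ = 1
  coord_e : ∀ i j, coord i (e j) = if i = j then 1 else 0
  coord_bdd : ∃ C : ℝ, ∀ j, ‖coord j‖ ≤ C
  expand : ∀ x : X,
    Tendsto (fun n => ∑ j ∈ Finset.range n, coord j x • e j) atTop (nhds x)

/-- The polydisk-type domain `𝔻_X(r) = {x ∈ X : |e_j^*(x)| < r j for all j}`. -/
def polydisk {X : Type*} [NormedAddCommGroup X] [NormedSpace ℂ X]
    (B : NormalizedSchauderBasis X) (r : ℕ → ℝ) : Set X :=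
  {x | ∀ j, ‖B.coord j x‖ < r j}

/-! If `inf r > 0`, the coordinates of a point `x` of the polydisk tend to `0`, so the gaps
`r j - |e_j^*(x)|` are eventually at least `inf r / 2`; being positive, they are bounded below
by some `δ > 0`. As the coordinate functionals are uniformly bounded by some `C`, the ball of
radius `δ / C` about `x` lies in the polydisk. Conversely, if a ball of radius `ε` about `0` lies
in the polydisk, testing it on the points `(ε / 2) e_j` gives `ε / 2 < r j` for every `j`. -/

theorem tendsto_zero_of_tendsto_sum_range {G : Type*} [AddCommGroup G] [TopologicalSpace G]
    [IsTopologicalAddGroup G] {f : ℕ → G} {a : G}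
    (h : Tendsto (fun n => ∑ i ∈ Finset.range n, f i) atTop (𝓝 a)) :
    Tendsto f atTop (𝓝 0) := by
  have hsucc := (h.comp (tendsto_add_atTop_nat 1)).sub h
  rw [sub_self] at hsucc
  refine hsucc.congr fun n => ?_
  simp only [Function.comp_apply, Finset.sum_range_succ, add_sub_cancel_left]

theorem exists_lt_forall_le_of_eventually_le {β : Type*} [LinearOrder β] {g : ℕ → β} {a c : β}
    (hg : ∀ j, a < g j) (hac : a < c) (hc : ∀ᶠ j in atTop, c ≤ g j) :
    ∃ δ, a < δ ∧ ∀ j, δ ≤ g j := by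
  obtain ⟨N, hN⟩ := hc.exists_forall_of_atTop
  let s := Finset.range (N + 1)
  refine ⟨min c (s.inf' Finset.nonempty_range_add_one g),
    lt_min hac ((Finset.lt_inf'_iff _).2 fun j _ => hg j), fun j => ?_⟩
  rcases le_or_gt j N with hj | hj
  · exact (min_le_right _ _).trans (s.inf'_le g (Finset.mem_range_succ_iff.2 hj))
  · exact (min_le_left _ _).trans (hN j hj.le)

namespace NormalizedSchauderBasis

variable {X : Type*} [NormedAddCommGroup X] [NormedSpace ℂ X] (B : NormalizedSchauderBasis X)

theorem coord_smul_e (c : ℂ) (j : ℕ) : B.coord j (c • B.e j) = c := by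
  simp [B.coord_e]

theorem exists_pos_norm_coord_le : ∃ C > 0, ∀ j, ‖B.coord j‖ ≤ C := by
  obtain ⟨C, hC⟩ := B.coord_bdd
  exact ⟨max C 1, by positivity, fun j => (hC j).trans (le_max_left _ _)⟩

theorem tendsto_norm_coord (x : X) : Tendsto (fun j => ‖B.coord j x‖) atTop (𝓝 0) := by
  have h := (tendsto_zero_of_tendsto_sum_range (B.expand x)).norm
  rw [norm_zero] at h
  simpa only [norm_smul, B.norm_e, mul_one] using h

end NormalizedSchauderBasis

section Polydisk

variable {X : Type*} [NormedAddCommGroup X] [NormedSpace ℂ X] {B : NormalizedSchauderBasis X}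
  {r : ℕ → ℝ}

theorem zero_mem_polydisk (hr : ∀ j, 0 < r j) : (0 : X) ∈ polydisk B r := by
  simpa [polydisk] using hr

theorem half_lt_of_ball_subset_polydisk {ε : ℝ} (hε : 0 < ε)
    (h : Metric.ball (0 : X) ε ⊆ polydisk B r) (j : ℕ) : ε / 2 < r j := by
  have hmem : ((ε / 2 : ℝ) : ℂ) • B.e j ∈ Metric.ball (0 : X) ε := by
    rw [mem_ball_zero_iff, norm_smul, B.norm_e, mul_one, Complex.norm_real,
      Real.norm_of_nonneg (by positivity)]
    exact half_lt_self hε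
  simpa [B.coord_smul_e, abs_of_pos hε] using h hmem j

theorem exists_pos_add_le_of_mem_polydisk {m : ℝ} (hm : 0 < m) (hmr : ∀ j, m ≤ r j) {x : X}
    (hx : x ∈ polydisk B r) : ∃ δ > 0, ∀ j, ‖B.coord j x‖ + δ ≤ r j := by
  have hsmall : ∀ᶠ j in atTop, m / 2 ≤ r j - ‖B.coord j x‖ := by
    filter_upwards [(B.tendsto_norm_coord x).eventually_le_const (half_pos hm)] with j hj
    linarith [hmr j]
  obtain ⟨δ, hδ, hgap⟩ :=
    exists_lt_forall_le_of_eventually_le (fun j => sub_pos.2 (hx j)) (half_pos hm) hsmall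
  exact ⟨δ, hδ, fun j => by linarith [hgap j]⟩

theorem ball_subset_polydisk {C δ : ℝ} (hC : 0 < C) (hB : ∀ j, ‖B.coord j‖ ≤ C) {x : X}
    (hgap : ∀ j, ‖B.coord j x‖ + δ ≤ r j) : Metric.ball x (δ / C) ⊆ polydisk B r := by
  intro y hy j
  rw [Metric.mem_ball, dist_eq_norm] at hy
  calc ‖B.coord j y‖ ≤ ‖B.coord j x‖ + ‖B.coord j (y - x)‖ := by
        simpa only [map_sub, add_sub_cancel] using norm_add_le (B.coord j x) (B.coord j (y - x))
    _ ≤ ‖B.coord j x‖ + C * ‖y - x‖ := by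
        gcongr
        exact (B.coord j).le_of_opNorm_le (hB j) _
    _ < ‖B.coord j x‖ + C * (δ / C) := by gcongr
    _ = ‖B.coord j x‖ + δ := by rw [mul_div_cancel₀ _ hC.ne']
    _ ≤ r j := hgap j

theorem isOpen_polydisk {m : ℝ} (hm : 0 < m) (hmr : ∀ j, m ≤ r j) : IsOpen (polydisk B r) := by
  obtain ⟨C, hC, hB⟩ := B.exists_pos_norm_coord_le
  refine Metric.isOpen_iff.2 fun x hx => ?_
  obtain ⟨δ, hδ, hgap⟩ := exists_pos_add_le_of_mem_polydisk hm hmr hx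
  exact ⟨δ / C, div_pos hδ hC, ball_subset_polydisk hC hB hgap⟩

end Polydisk

theorem stmt0_general {X : Type*} [NormedAddCommGroup X] [NormedSpace ℂ X]
    (B : NormalizedSchauderBasis X) (r : ℕ → ℝ) (hr : ∀ j, 0 < r j) :
    IsOpen (polydisk B r) ↔ 0 < ⨅ j, r j := by
  constructor
  · intro hopen
    obtain ⟨ε, hε, hball⟩ := Metric.isOpen_iff.1 hopen 0 (zero_mem_polydisk hr)
    exact (half_pos hε).trans_le
      (le_ciInf fun j => (half_lt_of_ball_subset_polydisk hε hball j).le)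
  · intro hm
    exact isOpen_polydisk hm (ciInf_le ⟨0, Set.forall_mem_range.2 fun j => (hr j).le⟩)

/-- for a sequence `r` of positive reals, `𝔻_X(r)` is open in `X`
iff `inf_j r_j > 0`. -/
theorem stmt0 {X : Type*} [NormedAddCommGroup X] [NormedSpace ℂ X] [CompleteSpace X]
    (B : NormalizedSchauderBasis X) (r : ℕ → ℝ) (hr : ∀ j, 0 < r j) :
    IsOpen (polydisk B r) ↔ 0 < ⨅ j, r j :=
  stmt0_general B r hr
end
end

section
/- Let (r_n)_{n≥1} ⊂ (0,1) satisfy ∑_{n=1}^∞ (1 − r_n) < ∞, and set δ = ∏_{n=1}^∞ r_n > 0. Then for every x = (x_n) ∈ B_{c₀} the infinite product f(x) = ∏_{n=1}^∞ (r_n − x_n)/(1 − r_n x_n) converges; the resulting function f : B_{c₀} → ℂ is holomorphic, satisfies |f(x)| ≤ 1 for all x ∈ B_{c₀}, and f(0) = δ. -/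
/-!
A factor `b_t(z) = (t - z) / (1 - t z)` with `|t| ≤ 1` maps the unit disc into the closed disc,
since `‖1 - t z‖² - ‖t - z‖² = (1 - t²)(1 - ‖z‖²)`, and `b_t(z) - 1 = -(1 - t)(1 + z) / (1 - t z)`
is `O(1 - t)` uniformly on `‖z‖ ≤ ρ < 1`. Hence `∑ (1 - r_n) < ∞` makes the product converge,
with modulus at most `1`. Of `c₀` only the fact that the coordinates `x ↦ x_n` are linear
functionals of norm `≤ 1` matters.

For holomorphy near `x₀` pick `‖x₀‖ < ρ < 1`. All but finitely many factors stay within `1/2` of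
`1` on the ball of radius `ρ`, so their product is the exponential of a series of logarithms whose
derivatives are `O(1 - r_n)` uniformly there; such a series may be differentiated term by term.
Finally `δ = exp (∑ log r_n) > 0`.
-/

open Filter Topology Metric Complex
open scoped ZeroAtInfty

noncomputable section

def blaschkeFactor (t : ℝ) (z : ℂ) : ℂ := (t - z) / (1 - t * z)

section BlaschkeFactor

variable {t ρ : ℝ}

lemma one_sub_norm_le_norm_one_sub_mul (ht : |t| ≤ 1) (z : ℂ) : 1 - ‖z‖ ≤ ‖1 - (t : ℂ) * z‖ :=
  calc 1 - ‖z‖ ≤ ‖(1 : ℂ)‖ - ‖(t : ℂ) * z‖ := by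
        rw [norm_one, norm_mul, norm_real, Real.norm_eq_abs]
        gcongr
        exact mul_le_of_le_one_left (norm_nonneg z) ht
    _ ≤ ‖1 - (t : ℂ) * z‖ := norm_sub_norm_le _ _

variable {z : ℂ}

lemma one_sub_mul_ne_zero (ht : |t| ≤ 1) (hz : ‖z‖ < 1) : 1 - (t : ℂ) * z ≠ 0 :=
  norm_pos_iff.1 (by linarith [one_sub_norm_le_norm_one_sub_mul ht z])

lemma norm_blaschkeFactor_le_one (ht : |t| ≤ 1) (hz : ‖z‖ < 1) : ‖blaschkeFactor t z‖ ≤ 1 := by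
  have hden := norm_pos_iff.2 (one_sub_mul_ne_zero ht hz)
  have key : ‖(1 : ℂ) - t * z‖ ^ 2 - ‖(t : ℂ) - z‖ ^ 2 = (1 - t ^ 2) * (1 - ‖z‖ ^ 2) := by
    simp only [Complex.sq_norm, normSq_apply, sub_re, sub_im, one_re, one_im, mul_re, mul_im,
      ofReal_re, ofReal_im]
    ring
  have hsq : ‖(t : ℂ) - z‖ ^ 2 ≤ ‖(1 : ℂ) - t * z‖ ^ 2 := by
    have h1 : 0 ≤ 1 - t ^ 2 := by nlinarith [abs_nonneg t, sq_abs t]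
    have h2 : 0 ≤ 1 - ‖z‖ ^ 2 := by nlinarith [norm_nonneg z]
    nlinarith [mul_nonneg h1 h2]
  rw [blaschkeFactor, norm_div, div_le_one hden]
  exact (pow_le_pow_iff_left₀ (norm_nonneg _) hden.le two_ne_zero).1 hsq

lemma blaschkeFactor_sub_one (h : 1 - (t : ℂ) * z ≠ 0) :
    blaschkeFactor t z - 1 = -((1 - t) * (1 + z)) / (1 - t * z) := by
  rw [blaschkeFactor]
  field_simp
  ring

lemma norm_blaschkeFactor_sub_one_le (ht : |t| ≤ 1) (hρ : ρ < 1) (hz : ‖z‖ ≤ ρ) :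
    ‖blaschkeFactor t z - 1‖ ≤ 2 * (1 - t) / (1 - ρ) := by
  have hden : 1 - ρ ≤ ‖1 - (t : ℂ) * z‖ :=
    (by linarith : 1 - ρ ≤ 1 - ‖z‖).trans (one_sub_norm_le_norm_one_sub_mul ht z)
  have h1t : ‖(1 : ℂ) - t‖ = 1 - t := by
    rw [← ofReal_one, ← ofReal_sub, norm_real, Real.norm_of_nonneg (by linarith [le_abs_self t])]
  have h1z : ‖(1 : ℂ) + z‖ ≤ 2 := by
    linarith [norm_add_le (1 : ℂ) z, norm_one (α := ℂ)]
  have h1t0 : 0 ≤ 1 - t := by linarith [le_abs_self t]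
  rw [blaschkeFactor_sub_one (norm_pos_iff.1 (by linarith)), norm_div, norm_neg, norm_mul, h1t,
    mul_comm 2]
  gcongr

lemma hasDerivAt_blaschkeFactor (h : 1 - (t : ℂ) * z ≠ 0) :
    HasDerivAt (blaschkeFactor t) ((t ^ 2 - 1) / (1 - t * z) ^ 2) z := by
  have hnum : HasDerivAt (fun w : ℂ => (t : ℂ) - w) (-1) z := (hasDerivAt_id z).const_sub _
  have hden : HasDerivAt (fun w : ℂ => 1 - (t : ℂ) * w) (-t) z := by
    simpa using ((hasDerivAt_id z).const_mul (t : ℂ)).const_sub 1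
  refine (hnum.div hden h).congr_deriv ?_
  field_simp
  ring

section NearOne

variable (hρ : ρ < 1) (ht : t ≤ 1) (htρ : 1 - t ≤ (1 - ρ) / 4) (hz : ‖z‖ ≤ ρ)
include hρ ht htρ hz

omit hρ in
lemma abs_le_one_of_one_sub_le : |t| ≤ 1 :=
  abs_le.2 ⟨by linarith [norm_nonneg z], ht⟩

lemma norm_blaschkeFactor_sub_one_le_half : ‖blaschkeFactor t z - 1‖ ≤ 1 / 2 :=
  calc ‖blaschkeFactor t z - 1‖ ≤ 2 * (1 - t) / (1 - ρ) :=
        norm_blaschkeFactor_sub_one_le (abs_le_one_of_one_sub_le ht htρ hz) hρ hz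
    _ ≤ 1 / 2 := by rw [div_le_div_iff₀ (by linarith) two_pos]; linarith

lemma blaschkeFactor_mem_slitPlane : blaschkeFactor t z ∈ slitPlane :=
  ball_one_subset_slitPlane <| mem_ball_iff_norm.2 <|
    (norm_blaschkeFactor_sub_one_le_half hρ ht htρ hz).trans_lt one_half_lt_one

lemma norm_log_blaschkeFactor_le : ‖log (blaschkeFactor t z)‖ ≤ 3 * (1 - t) / (1 - ρ) := by
  have h := norm_log_one_add_half_le_self (norm_blaschkeFactor_sub_one_le_half hρ ht htρ hz)
  rw [add_sub_cancel] at h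
  calc ‖log (blaschkeFactor t z)‖ ≤ 3 / 2 * ‖blaschkeFactor t z - 1‖ := h
    _ ≤ 3 / 2 * (2 * (1 - t) / (1 - ρ)) := by
        gcongr
        exact norm_blaschkeFactor_sub_one_le (abs_le_one_of_one_sub_le ht htρ hz) hρ hz
    _ = 3 * (1 - t) / (1 - ρ) := by ring

lemma hasDerivAt_log_blaschkeFactor :
    HasDerivAt (fun w => log (blaschkeFactor t w)) ((t ^ 2 - 1) / ((1 - t * z) * (t - z))) z := by
  have hden := one_sub_mul_ne_zero (abs_le_one_of_one_sub_le ht htρ hz) (by linarith)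
  have hslit := blaschkeFactor_mem_slitPlane hρ ht htρ hz
  have hnum : (t : ℂ) - z ≠ 0 := by
    intro h
    apply slitPlane_ne_zero hslit
    rw [blaschkeFactor, h, zero_div]
  refine ((hasDerivAt_blaschkeFactor hden).clog hslit).congr_deriv ?_
  rw [blaschkeFactor]
  field_simp

lemma norm_deriv_log_blaschkeFactor_le :
    ‖((t : ℂ) ^ 2 - 1) / ((1 - t * z) * (t - z))‖ ≤ 4 * (1 - t) / (1 - ρ) ^ 2 := by
  have hd : 0 < 1 - ρ := by linarith
  have h1 : 1 - ρ ≤ ‖1 - (t : ℂ) * z‖ := (by linarith : 1 - ρ ≤ 1 - ‖z‖).trans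
    (one_sub_norm_le_norm_one_sub_mul (abs_le_one_of_one_sub_le ht htρ hz) z)
  have h2 : (1 - ρ) / 2 ≤ ‖(t : ℂ) - z‖ := by
    have := norm_sub_norm_le (t : ℂ) z
    rw [norm_real, Real.norm_of_nonneg (by linarith [norm_nonneg z])] at this
    linarith
  have hnum : ‖(t : ℂ) ^ 2 - 1‖ = (1 - t) * (1 + t) := by
    rw [← ofReal_pow, ← ofReal_one, ← ofReal_sub, norm_real,
      Real.norm_of_nonpos (by nlinarith [norm_nonneg z])]
    ring
  have h1t : 0 ≤ 1 - t := by linarith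
  rw [norm_div, norm_mul, hnum,
    div_le_div_iff₀ (mul_pos (by linarith) (by linarith)) (by positivity)]
  calc (1 - t) * (1 + t) * (1 - ρ) ^ 2 ≤ 4 * (1 - t) * ((1 - ρ) * ((1 - ρ) / 2)) := by
        nlinarith [mul_nonneg (mul_nonneg h1t h1t) (sq_nonneg (1 - ρ))]
    _ ≤ 4 * (1 - t) * (‖1 - (t : ℂ) * z‖ * ‖(t : ℂ) - z‖) := by gcongr

end NearOne

end BlaschkeFactor

namespace ZeroAtInftyContinuousMap

variable {α β : Type*} [TopologicalSpace α] [NormedAddCommGroup β]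

lemma norm_apply_le (f : C₀(α, β)) (x : α) : ‖f x‖ ≤ ‖f‖ := by
  rw [← norm_toBCF_eq_norm]
  exact f.toBCF.norm_coe_le_norm x

variable (𝕜 : Type*) [NontriviallyNormedField 𝕜] [NormedSpace 𝕜 β]

def evalCLM (x : α) : C₀(α, β) →L[𝕜] β :=
  LinearMap.mkContinuous
    { toFun := fun f => f x
      map_add' := fun _ _ => rfl
      map_smul' := fun _ _ => rfl }
    1 (fun f => by simpa using norm_apply_le f x)

lemma norm_evalCLM_le (x : α) : ‖(evalCLM 𝕜 x : C₀(α, β) →L[𝕜] β)‖ ≤ 1 :=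
  LinearMap.mkContinuous_norm_le _ zero_le_one _

end ZeroAtInftyContinuousMap

lemma ContinuousLinearMap.norm_apply_le_of_opNorm_le_one {𝕜 E F : Type*}
    [NontriviallyNormedField 𝕜] [SeminormedAddCommGroup E] [SeminormedAddCommGroup F]
    [NormedSpace 𝕜 E] [NormedSpace 𝕜 F] {f : E →L[𝕜] F} (hf : ‖f‖ ≤ 1) (x : E) :
    ‖f x‖ ≤ ‖x‖ := by
  simpa using f.le_of_opNorm_le hf x

section BlaschkeProduct

variable {E ι : Type*} [NormedAddCommGroup E] [NormedSpace ℂ E] {ℓ : ι → E →L[ℂ] ℂ} {r : ι → ℝ}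
  {ρ : ℝ} {x : E}

lemma summable_blaschkeFactor_sub_one (hr : ∀ i, |r i| ≤ 1) (hsum : Summable fun i => 1 - r i)
    (hℓ : ∀ i, ‖ℓ i‖ ≤ 1) (hx : ‖x‖ < 1) :
    Summable fun i => blaschkeFactor (r i) (ℓ i x) - 1 := by
  refine (hsum.mul_left (2 / (1 - ‖x‖))).of_norm_bounded fun i => ?_
  calc ‖blaschkeFactor (r i) (ℓ i x) - 1‖ ≤ 2 * (1 - r i) / (1 - ‖x‖) :=
        norm_blaschkeFactor_sub_one_le (hr i) hx
          ((ℓ i).norm_apply_le_of_opNorm_le_one (hℓ i) x)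
    _ = 2 / (1 - ‖x‖) * (1 - r i) := by ring

lemma multipliable_blaschkeFactor (hr : ∀ i, |r i| ≤ 1) (hsum : Summable fun i => 1 - r i)
    (hℓ : ∀ i, ‖ℓ i‖ ≤ 1) (hx : ‖x‖ < 1) :
    Multipliable fun i => blaschkeFactor (r i) (ℓ i x) := by
  simpa using
    Complex.multipliable_one_add_of_summable (summable_blaschkeFactor_sub_one hr hsum hℓ hx)

lemma norm_tprod_blaschkeFactor_le_one (hr : ∀ i, |r i| ≤ 1) (hsum : Summable fun i => 1 - r i)
    (hℓ : ∀ i, ‖ℓ i‖ ≤ 1) (hx : ‖x‖ < 1) :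
    ‖∏' i, blaschkeFactor (r i) (ℓ i x)‖ ≤ 1 := by
  refine le_of_tendsto (multipliable_blaschkeFactor hr hsum hℓ hx).hasProd.norm
    (Eventually.of_forall fun s => Finset.prod_le_one (fun i _ => norm_nonneg _) fun i _ => ?_)
  exact norm_blaschkeFactor_le_one (hr i)
    (((ℓ i).norm_apply_le_of_opNorm_le_one (hℓ i) x).trans_lt hx)

section NearOne

variable (hρ : ρ < 1) (hr : ∀ i, r i ≤ 1) (hrρ : ∀ i, 1 - r i ≤ (1 - ρ) / 4)
  (hsum : Summable fun i => 1 - r i) (hℓ : ∀ i, ‖ℓ i‖ ≤ 1)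
include hρ hr hrρ hsum hℓ

lemma summable_log_blaschkeFactor (hx : ‖x‖ ≤ ρ) :
    Summable fun i => log (blaschkeFactor (r i) (ℓ i x)) := by
  refine (hsum.mul_left (3 / (1 - ρ))).of_norm_bounded fun i => ?_
  calc ‖log (blaschkeFactor (r i) (ℓ i x))‖ ≤ 3 * (1 - r i) / (1 - ρ) :=
        norm_log_blaschkeFactor_le hρ (hr i) (hrρ i)
          (((ℓ i).norm_apply_le_of_opNorm_le_one (hℓ i) x).trans hx)
    _ = 3 / (1 - ρ) * (1 - r i) := by ring

lemma differentiableOn_tsum_log_blaschkeFactor :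
    DifferentiableOn ℂ (fun x => ∑' i, log (blaschkeFactor (r i) (ℓ i x))) (ball 0 ρ) := by
  have hball : ∀ y ∈ ball (0 : E) ρ, ∀ i, ‖ℓ i y‖ ≤ ρ := fun y hy i =>
    ((ℓ i).norm_apply_le_of_opNorm_le_one (hℓ i) y).trans (mem_ball_zero_iff.1 hy).le
  set d : ι → E → ℂ := fun i y => ((r i : ℂ) ^ 2 - 1) / ((1 - r i * ℓ i y) * (r i - ℓ i y))
  have hderiv : ∀ i, ∀ y ∈ ball (0 : E) ρ,
      HasFDerivAt (fun x => log (blaschkeFactor (r i) (ℓ i x))) (d i y • ℓ i) y := fun i y hy =>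
    (hasDerivAt_log_blaschkeFactor hρ (hr i) (hrρ i) (hball y hy i)).comp_hasFDerivAt y
      (ℓ i).hasFDerivAt
  have hbound : ∀ i, ∀ y ∈ ball (0 : E) ρ, ‖d i y • ℓ i‖ ≤ 4 / (1 - ρ) ^ 2 * (1 - r i) := by
    intro i y hy
    calc ‖d i y • ℓ i‖ ≤ ‖d i y‖ * ‖ℓ i‖ := (ℓ i).opNorm_smul_le (d i y)
      _ ≤ 4 * (1 - r i) / (1 - ρ) ^ 2 * 1 :=
          mul_le_mul (norm_deriv_log_blaschkeFactor_le hρ (hr i) (hrρ i) (hball y hy i)) (hℓ i)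
            (norm_nonneg _) (div_nonneg (by linarith [hr i]) (sq_nonneg _))
      _ = 4 / (1 - ρ) ^ 2 * (1 - r i) := by ring
  intro x hx
  exact (hasFDerivAt_tsum_of_isPreconnected (hsum.mul_left _) isOpen_ball
    (convex_ball 0 ρ).isPreconnected hderiv hbound hx
    (summable_log_blaschkeFactor hρ hr hrρ hsum hℓ (mem_ball_zero_iff.1 hx).le)
    hx).differentiableAt.differentiableWithinAt

lemma differentiableOn_tprod_blaschkeFactor_of_one_sub_le :
    DifferentiableOn ℂ (fun x => ∏' i, blaschkeFactor (r i) (ℓ i x)) (ball 0 ρ) := by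
  refine (differentiableOn_tsum_log_blaschkeFactor hρ hr hrρ hsum hℓ).cexp.congr fun x hx => ?_
  have hxρ : ∀ i, ‖ℓ i x‖ ≤ ρ := fun i =>
    ((ℓ i).norm_apply_le_of_opNorm_le_one (hℓ i) x).trans (mem_ball_zero_iff.1 hx).le
  exact (cexp_tsum_eq_tprod
    (fun i => slitPlane_ne_zero (blaschkeFactor_mem_slitPlane hρ (hr i) (hrρ i) (hxρ i)))
    (summable_log_blaschkeFactor hρ hr hrρ hsum hℓ (mem_ball_zero_iff.1 hx).le)).symm

end NearOne

lemma differentiableOn_tprod_blaschkeFactor {ℓ : ℕ → E →L[ℂ] ℂ} {r : ℕ → ℝ}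
    (hr : ∀ n, |r n| ≤ 1) (hsum : Summable fun n => 1 - r n) (hℓ : ∀ n, ‖ℓ n‖ ≤ 1) :
    DifferentiableOn ℂ (fun x => ∏' n, blaschkeFactor (r n) (ℓ n x)) (ball 0 1) := by
  intro x₀ hx₀
  rw [mem_ball_zero_iff] at hx₀
  obtain ⟨ρ, hx₀ρ, hρ⟩ := exists_between hx₀
  obtain ⟨N, hN⟩ := eventually_atTop.1
    (hsum.tendsto_atTop_zero.eventually_le_const (by linarith : (0 : ℝ) < (1 - ρ) / 4))
  have head : DifferentiableAt ℂ
      (fun x => ∏ n ∈ Finset.range N, blaschkeFactor (r n) (ℓ n x)) x₀ :=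
    (HasFDerivAt.finsetProd fun n _ => (hasDerivAt_blaschkeFactor (one_sub_mul_ne_zero (hr n)
      (((ℓ n).norm_apply_le_of_opNorm_le_one (hℓ n) x₀).trans_lt hx₀))).comp_hasFDerivAt x₀
      (ℓ n).hasFDerivAt).differentiableAt
  have tail : DifferentiableAt ℂ (fun x => ∏' n, blaschkeFactor (r (n + N)) (ℓ (n + N) x)) x₀ :=
    (differentiableOn_tprod_blaschkeFactor_of_one_sub_le (ℓ := fun n => ℓ (n + N)) hρ
      (fun n => (abs_le.1 (hr _)).2) (fun n => hN _ (Nat.le_add_left N n))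
      ((summable_nat_add_iff N).2 hsum) (fun n => hℓ _)).differentiableAt
      (isOpen_ball.mem_nhds (mem_ball_zero_iff.2 hx₀ρ))
  have split : ∀ᶠ x in 𝓝 x₀, ∏' n, blaschkeFactor (r n) (ℓ n x) =
      (∏ n ∈ Finset.range N, blaschkeFactor (r n) (ℓ n x)) *
        ∏' n, blaschkeFactor (r (n + N)) (ℓ (n + N) x) := by
    filter_upwards [isOpen_ball.mem_nhds (mem_ball_zero_iff.2 hx₀)] with x hx
    exact (Multipliable.prod_mul_tprod_nat_mul' (f := fun n => blaschkeFactor (r n) (ℓ n x))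
      (multipliable_blaschkeFactor (fun n => hr _) ((summable_nat_add_iff N).2 hsum)
        (fun n => hℓ _) (mem_ball_zero_iff.1 hx))).symm
  exact ((head.mul tail).congr_of_eventuallyEq split).differentiableWithinAt

end BlaschkeProduct

lemma tprod_pos_of_summable_one_sub {ι : Type*} {r : ι → ℝ} (hr : ∀ i, 0 < r i)
    (hsum : Summable fun i => 1 - r i) : 0 < ∏' i, r i := by
  have hlog : Summable fun i => Real.log (r i) := by
    simpa using Real.summable_log_one_add_of_summable hsum.neg
  rw [← Real.rexp_tsum_eq_tprod hr hlog]
  exact Real.exp_pos _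

/-- if `(r_n) ⊂ (0,1)` with `∑ (1 − r_n) < ∞`, then `δ = ∏ r_n > 0`, the
Blaschke-type product `f(x) = ∏_n (r_n − x_n)/(1 − r_n x_n)` converges for every `x` in
the open unit ball of `c₀`, defines a holomorphic function there, is bounded by `1`, and
`f(0) = δ`. -/
theorem stmt12 (r : ℕ → ℝ) (hr : ∀ n, r n ∈ Set.Ioo (0 : ℝ) 1)
    (hsum : Summable (fun n => 1 - r n)) :
    0 < (∏' n, r n) ∧
    (∀ x ∈ ball (0 : C₀(ℕ, ℂ)) 1,
      Multipliable (fun n => ((r n : ℂ) - x n) / (1 - (r n : ℂ) * x n))) ∧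
    DifferentiableOn ℂ
      (fun x : C₀(ℕ, ℂ) => ∏' n, ((r n : ℂ) - x n) / (1 - (r n : ℂ) * x n))
      (ball 0 1) ∧
    (∀ x ∈ ball (0 : C₀(ℕ, ℂ)) 1,
      ‖∏' n, ((r n : ℂ) - x n) / (1 - (r n : ℂ) * x n)‖ ≤ 1) ∧
    (fun x : C₀(ℕ, ℂ) => ∏' n, ((r n : ℂ) - x n) / (1 - (r n : ℂ) * x n)) 0 =
      ((∏' n, r n : ℝ) : ℂ) := by
  have hr' : ∀ n, |r n| ≤ 1 := fun n => abs_le.2 ⟨by linarith [(hr n).1], (hr n).2.le⟩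
  set ℓ : ℕ → C₀(ℕ, ℂ) →L[ℂ] ℂ := ZeroAtInftyContinuousMap.evalCLM ℂ
  have hℓ : ∀ n, ‖ℓ n‖ ≤ 1 := ZeroAtInftyContinuousMap.norm_evalCLM_le ℂ
  refine ⟨tprod_pos_of_summable_one_sub (fun n => (hr n).1) hsum,
    fun x hx => multipliable_blaschkeFactor (ℓ := ℓ) hr' hsum hℓ (mem_ball_zero_iff.1 hx),
    differentiableOn_tprod_blaschkeFactor (ℓ := ℓ) hr' hsum hℓ,
    fun x hx => norm_tprod_blaschkeFactor_le_one (ℓ := ℓ) hr' hsum hℓ (mem_ball_zero_iff.1 hx), ?_⟩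
  simp only [ZeroAtInftyContinuousMap.zero_apply, sub_zero, mul_zero, div_one]
  exact (Function.LeftInverse.map_tprod r (g := ofRealHom) continuous_ofReal continuous_re
    ofReal_re).symm
end
end
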